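/- arXiv:2603.17902 — 2 statements merged into one kernel-verified Lean document; each statement's English description precedes it below -/
import Mathlib

section
/- Combining the softmax sensitivity bound with composition: if the per-token logit sensitivity is bounded by Δ (i.e., |ℓ_D(w,h) - ℓ_{D'}(w,h)| ≤ Δ for all tokens w and histories h) and tokens are generated by temperature-T softmax autoregressively for L steps, then the message-level distribution satisfies P_D(m) ≤ exp(2ΔL/T) · P_{D'}(m) for every message m of length L. -/
open Real Finset

noncomputable def softmax {V : Type*} [Fintype V] (T : ℝ) (f : V → ℝ) (w : V) : ℝ :=
  exp (f w / T) / ∑ u, exp (f u / T)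

section Softmax

variable {V : Type*} [Fintype V] {T Δ : ℝ}

lemma softmax_nonneg (f : V → ℝ) (w : V) : 0 ≤ softmax T f w := by
  unfold softmax; positivity

lemma exp_div_le_exp_mul_exp_div (hT : 0 < T) {a b : ℝ} (h : a ≤ b + Δ) :
    exp (a / T) ≤ exp (Δ / T) * exp (b / T) := by
  rw [← exp_add, exp_le_exp, ← add_div]
  gcongr
  linarith

lemma sum_exp_div_le_exp_mul_sum (hT : 0 < T) {f g : V → ℝ} (h : ∀ u, f u ≤ g u + Δ) :
    ∑ u, exp (f u / T) ≤ exp (Δ / T) * ∑ u, exp (g u / T) := by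
  rw [mul_sum]
  exact sum_le_sum fun u _ => exp_div_le_exp_mul_exp_div hT (h u)

/-- Shifting every logit by at most `Δ` moves the numerator and the partition function of the
softmax each by a factor of at most `exp (Δ / T)`. -/
lemma softmax_le_exp_mul_softmax (hT : 0 < T) {f g : V → ℝ} (hs : ∀ u, |f u - g u| ≤ Δ)
    (w : V) : softmax T f w ≤ exp (2 * Δ / T) * softmax T g w := by
  have hf : 0 < ∑ u, exp (f u / T) :=
    (exp_pos _).trans_le (single_le_sum (fun u _ => (exp_pos _).le) (mem_univ w))
  have hg : 0 < ∑ u, exp (g u / T) :=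
    (exp_pos _).trans_le (single_le_sum (fun u _ => (exp_pos _).le) (mem_univ w))
  have hnum : exp (f w / T) ≤ exp (Δ / T) * exp (g w / T) :=
    exp_div_le_exp_mul_exp_div hT (by linarith [(abs_le.1 (hs w)).2])
  have hden : ∑ u, exp (g u / T) ≤ exp (Δ / T) * ∑ u, exp (f u / T) :=
    sum_exp_div_le_exp_mul_sum hT fun u => by linarith [(abs_le.1 (hs u)).1]
  unfold softmax
  rw [div_le_iff₀ hf]
  calc exp (f w / T)
      ≤ exp (Δ / T) * exp (g w / T) := hnum
    _ = exp (Δ / T) * (exp (g w / T) / ∑ u, exp (g u / T)) * ∑ u, exp (g u / T) := by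
        field_simp
    _ ≤ exp (Δ / T) * (exp (g w / T) / ∑ u, exp (g u / T)) *
          (exp (Δ / T) * ∑ u, exp (f u / T)) := by gcongr
    _ = exp (2 * Δ / T) * (exp (g w / T) / ∑ u, exp (g u / T)) * ∑ u, exp (f u / T) := by
        rw [two_mul, add_div, exp_add]; ring

end Softmax

theorem message_level_softmax_privacy_bound_general
    {V : Type*} [Fintype V]
    (L : ℕ) (T Δ : ℝ) (hT : 0 < T)
    (ℓD ℓD' : (k : Fin L) → ((Fin (k : ℕ) → V) → V → ℝ))
    (hsens : ∀ k h w, |ℓD k h w - ℓD' k h w| ≤ Δ) :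
    ∀ m : Fin L → V,
      (∏ k : Fin L,
          Real.exp (ℓD k (fun j => m (Fin.castLE k.isLt.le j)) (m k) / T) /
            (∑ u : V, Real.exp (ℓD k (fun j => m (Fin.castLE k.isLt.le j)) u / T))) ≤
        Real.exp (2 * Δ * L / T) *
          ∏ k : Fin L,
            Real.exp (ℓD' k (fun j => m (Fin.castLE k.isLt.le j)) (m k) / T) /
              (∑ u : V, Real.exp (ℓD' k (fun j => m (Fin.castLE k.isLt.le j)) u / T)) := by
  intro m
  let hist (k : Fin L) : Fin k → V := fun j => m (Fin.castLE k.isLt.le j)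
  calc ∏ k, softmax T (ℓD k (hist k)) (m k)
      ≤ ∏ k, exp (2 * Δ / T) * softmax T (ℓD' k (hist k)) (m k) :=
        prod_le_prod (fun k _ => softmax_nonneg _ _)
          fun k _ => softmax_le_exp_mul_softmax hT (hsens k _) (m k)
    _ = exp (2 * Δ * L / T) * ∏ k, softmax T (ℓD' k (hist k)) (m k) := by
        rw [prod_mul_distrib, prod_const, card_univ, Fintype.card_fin, ← exp_nat_mul]
        congr 2
        ring

/-- Message-level privacy bound: logit sensitivity `Δ` plus temperature-`T` softmax
decoding over `L` autoregressive steps gives `P_D(m) ≤ exp (2ΔL/T) · P_{D'}(m)`. -/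
theorem message_level_softmax_privacy_bound
    {V : Type*} [Fintype V] [Nonempty V]
    (L : ℕ) (hL : 1 ≤ L) (T Δ : ℝ) (hT : 0 < T) (hΔ : 0 ≤ Δ)
    (ℓD ℓD' : (k : Fin L) → ((Fin (k : ℕ) → V) → V → ℝ))
    (hsens : ∀ k h w, |ℓD k h w - ℓD' k h w| ≤ Δ) :
    ∀ m : Fin L → V,
      (∏ k : Fin L,
          Real.exp (ℓD k (fun j => m (Fin.castLE k.isLt.le j)) (m k) / T) /
            (∑ u : V, Real.exp (ℓD k (fun j => m (Fin.castLE k.isLt.le j)) u / T))) ≤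
        Real.exp (2 * Δ * L / T) *
          ∏ k : Fin L,
            Real.exp (ℓD' k (fun j => m (Fin.castLE k.isLt.le j)) (m k) / T) /
              (∑ u : V, Real.exp (ℓD' k (fun j => m (Fin.castLE k.isLt.le j)) u / T)) :=
  message_level_softmax_privacy_bound_general L T Δ hT ℓD ℓD' hsens
end

section
/- If for every T > 0 the covariance Cov_{π_T}(ν, U) under the Gibbs distribution π_T(m) = exp(U(m)/T)/Z(T) is nonnegative, then the expected utility E(T) = E_{π_T}[ν] is nonincreasing in T on (0,∞). -/
/-!
In the inverse temperature `β = 1/T`, the derivative of `β ↦ E_{π_{1/β}}[ν]` is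
`Cov_{π_{1/β}}(ν, U)`, so the hypothesis makes the expected utility nondecreasing in `β`,
that is, nonincreasing in `T`.
-/

open Finset Real

section GibbsMean

variable {M : Type*} [Fintype M]

noncomputable def gibbsMean (U f : M → ℝ) (β : ℝ) : ℝ :=
  (∑ m, f m * exp (β * U m)) / ∑ m, exp (β * U m)

theorem sum_mul_exp_div_sum_exp_eq_gibbsMean (U f : M → ℝ) (T : ℝ) :
    ∑ m, f m * (exp (U m / T) / ∑ m', exp (U m' / T)) = gibbsMean U f T⁻¹ := by
  simp only [gibbsMean, sum_div, mul_div_assoc, div_eq_inv_mul (U _)]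

variable [Nonempty M]

theorem sum_exp_pos (U : M → ℝ) (β : ℝ) : 0 < ∑ m, exp (β * U m) :=
  sum_pos (fun _ _ => exp_pos _) univ_nonempty

theorem hasDerivAt_gibbsMean (U f : M → ℝ) (β : ℝ) :
    HasDerivAt (gibbsMean U f)
      (gibbsMean U (fun m => f m * U m) β - gibbsMean U f β * gibbsMean U U β) β := by
  have hexp : ∀ m, HasDerivAt (fun b => exp (b * U m)) (U m * exp (β * U m)) β := fun m => by
    simpa [mul_comm] using (hasDerivAt_mul_const (U m) (x := β)).exp
  have hN : HasDerivAt (fun b => ∑ m, f m * exp (b * U m))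
      (∑ m, f m * (U m * exp (β * U m))) β :=
    HasDerivAt.fun_sum fun m _ => (hexp m).const_mul (f m)
  have hZ : HasDerivAt (fun b => ∑ m, exp (b * U m)) (∑ m, U m * exp (β * U m)) β :=
    HasDerivAt.fun_sum fun m _ => hexp m
  have hZ0 := (sum_exp_pos U β).ne'
  refine (hN.div hZ hZ0).congr_deriv ?_
  simp only [gibbsMean, mul_assoc]
  generalize ∑ m, exp (β * U m) = Z at hZ0 ⊢
  generalize ∑ m, f m * (U m * exp (β * U m)) = A
  generalize ∑ m, f m * exp (β * U m) = B
  generalize ∑ m, U m * exp (β * U m) = C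
  field_simp

theorem monotoneOn_gibbsMean {U f : M → ℝ} {s : Set ℝ} (hs : Convex ℝ s)
    (hcov : ∀ β ∈ interior s,
      0 ≤ gibbsMean U (fun m => f m * U m) β - gibbsMean U f β * gibbsMean U U β) :
    MonotoneOn (gibbsMean U f) s :=
  monotoneOn_of_hasDerivWithinAt_nonneg hs
    (HasDerivAt.continuousOn fun β _ => hasDerivAt_gibbsMean U f β)
    (fun β _ => (hasDerivAt_gibbsMean U f β).hasDerivWithinAt) hcov

end GibbsMean

/-- If the covariance of the utility `ν` and the cumulative logit score `U` under the
Gibbs distribution is nonnegative for every temperature, then the expected utility is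
nonincreasing in the temperature on `(0, ∞)`. -/
theorem gibbs_expected_utility_antitone_of_cov_nonneg
    {M : Type*} [Fintype M] [Nonempty M]
    (U ν : M → ℝ)
    (hcov : ∀ T : ℝ, 0 < T →
      0 ≤ (∑ m : M, ν m * U m * (Real.exp (U m / T) / ∑ m' : M, Real.exp (U m' / T))) -
          (∑ m : M, ν m * (Real.exp (U m / T) / ∑ m' : M, Real.exp (U m' / T))) *
            (∑ m : M, U m * (Real.exp (U m / T) / ∑ m' : M, Real.exp (U m' / T)))) :
    AntitoneOn
      (fun T : ℝ =>
        ∑ m : M, ν m * (Real.exp (U m / T) / ∑ m' : M, Real.exp (U m' / T)))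
      (Set.Ioi 0) := by
  simp only [sum_mul_exp_div_sum_exp_eq_gibbsMean] at hcov ⊢
  have hmono : MonotoneOn (gibbsMean U ν) (Set.Ioi 0) :=
    monotoneOn_gibbsMean (convex_Ioi 0) fun β hβ => by
      rw [interior_Ioi] at hβ
      simpa only [inv_inv] using hcov β⁻¹ (inv_pos.2 hβ)
  intro T₁ hT₁ T₂ hT₂ hT
  exact hmono (inv_pos.2 hT₂ : 0 < T₂⁻¹) (inv_pos.2 hT₁ : 0 < T₁⁻¹) (inv_anti₀ hT₁ hT)
end
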